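/- If $\alpha < \lambda - n$, then the power weight $w = |\cdot|^{\alpha}$ satisfies $\|w^{1/p} 1_{(0,1)^n}\|_{L^{p,\lambda}} = \infty$; and if $\alpha \ge \lambda + (p-1)n$, then $\|w^{-1/p} 1_{(0,1)^n}\|_{H^{p',\lambda}} = \infty$. -/

import Mathlib

/-!
Near the origin the cube `[0, r]ⁿ` carries weight mass `≳ r^{α+n}`, so for `α < λ - n` the Morrey
quotient `r^{α+n-λ}` blows up as `r → 0`.

For the block side, a weight `b ∈ 𝓑_λ` has `∫_{[0,r]ⁿ} b ≲ r^{n-λ}`: by `A₁`, `b` exceeds a fixed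
multiple of its cube average on the cube, so the Choquet integral of `b` is at least `r^λ` times
that average. Reverse Hölder on the shell `[0,r]ⁿ \ [0,r/2]ⁿ` then bounds
`∫ |w^{-1/p}|^{p'} b^{-p'/p}` from below by a constant times `r^{(λ + (p-1)n - α)/(p-1)} ≥ 1`, and
the disjoint dyadic shells `r = 2^{-k}` add up to `∞`.
-/

open MeasureTheory ENNReal Set

noncomputable section

/-- Axis-parallel cube with lower corner `c` and side length `h`. -/
def Cube (n : ℕ) (c : Fin n → ℝ) (h : ℝ) : Set (Fin n → ℝ) :=
  {x | ∀ i, c i ≤ x i ∧ x i ≤ c i + h}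

/-- `λ`-dimensional Hausdorff content, via countable coverings by cubes. -/
def hausdorffContent (n : ℕ) (lam : ℝ) (E : Set (Fin n → ℝ)) : ℝ≥0∞ :=
  ⨅ (c : ℕ → Fin n → ℝ) (h : ℕ → ℝ) (_ : ∀ j, 0 < h j)
    (_ : E ⊆ ⋃ j, Cube n (c j) (h j)), ∑' j, ENNReal.ofReal (h j) ^ lam

/-- Choquet integral of an `ℝ≥0∞`-valued function against the Hausdorff content `H^λ`. -/
def choquetE (n : ℕ) (lam : ℝ) (φ : (Fin n → ℝ) → ℝ≥0∞) : ℝ≥0∞ :=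
  ∫⁻ t in Set.Ioi (0:ℝ), hausdorffContent n lam {y | ENNReal.ofReal t < φ y}

/-- Choquet integral of a real-valued function against the Hausdorff content `H^λ`. -/
def choquet (n : ℕ) (lam : ℝ) (φ : (Fin n → ℝ) → ℝ) : ℝ≥0∞ :=
  ∫⁻ t in Set.Ioi (0:ℝ), hausdorffContent n lam {y | t < φ y}

/-- The Morrey norm `‖f‖_{L^{p,λ}}`. -/
def morreyNorm (n : ℕ) (p lam : ℝ) (f : (Fin n → ℝ) → ℝ) : ℝ≥0∞ :=
  ⨆ (c : Fin n → ℝ) (h : ℝ) (_ : 0 < h),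
    ((∫⁻ x in Cube n c h, ENNReal.ofReal |f x| ^ p) / ENNReal.ofReal h ^ lam) ^ (1/p)

/-- The weighted Morrey norm of an `ℝ≥0∞`-valued function. -/
def morreyNormWE (n : ℕ) (p lam : ℝ) (w : (Fin n → ℝ) → ℝ) (f : (Fin n → ℝ) → ℝ≥0∞) : ℝ≥0∞ :=
  ⨆ (c : Fin n → ℝ) (h : ℝ) (_ : 0 < h),
    ((∫⁻ x in Cube n c h, f x ^ p * ENNReal.ofReal (w x)) / ENNReal.ofReal h ^ lam) ^ (1/p)

/-- The weighted Morrey norm `‖f‖_{L^{p,λ}(w)}`. -/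
def morreyNormW (n : ℕ) (p lam : ℝ) (w f : (Fin n → ℝ) → ℝ) : ℝ≥0∞ :=
  morreyNormWE n p lam w (fun x => ENNReal.ofReal |f x|)

/-- The Hardy–Littlewood maximal operator (over axis-parallel cubes). -/
def maximalFn (n : ℕ) (f : (Fin n → ℝ) → ℝ) (x : Fin n → ℝ) : ℝ≥0∞ :=
  ⨆ (c : Fin n → ℝ) (h : ℝ) (_ : 0 < h) (_ : x ∈ Cube n c h),
    (∫⁻ y in Cube n c h, ENNReal.ofReal |f y|) / ENNReal.ofReal (h ^ n)

/-- A weight: a nonnegative locally integrable function positive on a set of positive measure. -/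
def IsWeight (n : ℕ) (w : (Fin n → ℝ) → ℝ) : Prop :=
  Measurable w ∧ (∀ x, 0 ≤ w x) ∧ LocallyIntegrable w volume ∧ 0 < volume {x | 0 < w x}

/-- Muckenhoupt `A₁` weight with constant `C`. -/
def IsA1 (n : ℕ) (C : ℝ≥0∞) (w : (Fin n → ℝ) → ℝ) : Prop :=
  IsWeight n w ∧ ∀ᵐ x ∂(volume : Measure (Fin n → ℝ)), maximalFn n w x ≤ C * ENNReal.ofReal (w x)

/-- The basis `𝓑_λ`: `A₁` weights with Choquet integral against `H^λ` at most one. -/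
def MorreyBasis (n : ℕ) (lam : ℝ) : Set ((Fin n → ℝ) → ℝ) :=
  {b | (∃ C : ℝ≥0∞, C ≠ ⊤ ∧ IsA1 n C b) ∧ choquet n lam b ≤ 1}

/-- The norm of the space `H^{q,λ}`; note `b^{-q/q'} = b^{-(q-1)}`. -/
def hNorm (n : ℕ) (q lam : ℝ) (g : (Fin n → ℝ) → ℝ) : ℝ≥0∞ :=
  ⨅ (b : (Fin n → ℝ) → ℝ) (_ : b ∈ MorreyBasis n lam),
    (∫⁻ x, ENNReal.ofReal |g x| ^ q * ENNReal.ofReal (b x) ^ (-(q - 1))) ^ (1/q)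
/-- Euclidean norm on `Fin n → ℝ`. -/
def euclidNorm (n : ℕ) (x : Fin n → ℝ) : ℝ := Real.sqrt (∑ i, x i ^ 2)

/-- A `(p,λ)`-atom: supported in a cube `Q` with `‖a‖_{L^p} ≤ l(Q)^{-λ/p'}`. -/
def IsPLAtom (n : ℕ) (p lam : ℝ) (a : (Fin n → ℝ) → ℝ) : Prop :=
  Measurable a ∧ ∃ (c : Fin n → ℝ) (h : ℝ), 0 < h ∧ (∀ x ∉ Cube n c h, a x = 0) ∧
    (∫⁻ x, ENNReal.ofReal |a x| ^ p) ^ (1/p) ≤ ENNReal.ofReal h ^ (-(lam * (p - 1) / p))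

/-- The block space norm `‖f‖_{B^{p,λ}}`. -/
def blockNorm (n : ℕ) (p lam : ℝ) (f : (Fin n → ℝ) → ℝ) : ℝ≥0∞ :=
  ⨅ (cs : ℕ → ℝ) (a : ℕ → (Fin n → ℝ) → ℝ) (_ : ∀ k, IsPLAtom n p lam (a k))
    (_ : ∀ x, HasSum (fun k => cs k * a k x) (f x)),
    ∑' k, ENNReal.ofReal |cs k|

/-- The dyadic cube `2^{-k}(m + [0,1)^n)`. -/
def DCube (n : ℕ) (k : ℤ) (m : Fin n → ℤ) : Set (Fin n → ℝ) :=
  {x | ∀ i, (m i : ℝ) * (2:ℝ) ^ (-k) ≤ x i ∧ x i < ((m i : ℝ) + 1) * (2:ℝ) ^ (-k)}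

/-- The dyadic maximal operator with respect to a measure `μ`. -/
def dyadicMaximal (n : ℕ) (μ : Measure (Fin n → ℝ)) (f : (Fin n → ℝ) → ℝ)
    (x : Fin n → ℝ) : ℝ≥0∞ :=
  ⨆ (k : ℤ) (m : Fin n → ℤ) (_ : x ∈ DCube n k m),
    (∫⁻ y in DCube n k m, ENNReal.ofReal |f y| ∂μ) / μ (DCube n k m)

/-- The `L^p(μ)`-norm (with `p ∈ (0,∞]`) of an `ℝ≥0∞`-valued function. -/
def lpNormE {α : Type*} [MeasurableSpace α] (μ : Measure α) (p : ℝ≥0∞) (g : α → ℝ≥0∞) : ℝ≥0∞ :=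
  if p = ⊤ then essSup g μ else (∫⁻ x, g x ^ p.toReal ∂μ) ^ (1 / p.toReal)

/-- Content normalized on balls: the infimum of `ρ^λ` over balls `{|x| < ρ}` containing `E`. -/
def ballContent (n : ℕ) (lam : ℝ) (E : Set (Fin n → ℝ)) : ℝ≥0∞ :=
  ⨅ (ρ : ℝ) (_ : 0 ≤ ρ) (_ : E ⊆ {x | euclidNorm n x < ρ}), ENNReal.ofReal ρ ^ lam

/-- Choquet integral against the ball-normalized content. -/
def ballChoquet (n : ℕ) (lam : ℝ) (φ : (Fin n → ℝ) → ℝ) : ℝ≥0∞ :=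
  ∫⁻ t in Set.Ioi (0:ℝ), ballContent n lam {y | t < φ y}

/-- The `μ`-average of `g` over a dyadic cube (indexed by a pair `(k,m)`). -/
def dAvg (n : ℕ) (μ : Measure (Fin n → ℝ)) (g : (Fin n → ℝ) → ℝ)
    (Q : ℤ × (Fin n → ℤ)) : ℝ≥0∞ :=
  (∫⁻ y in DCube n Q.1 Q.2, ENNReal.ofReal (g y) ∂μ) / μ (DCube n Q.1 Q.2)

/-- `Q` is a stopping child of `F`: a maximal dyadic cube inside `F` whose `μ`-average of `g`
exceeds twice that of `F`. -/
def IsPChild (n : ℕ) (μ : Measure (Fin n → ℝ)) (g : (Fin n → ℝ) → ℝ)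
    (F Q : ℤ × (Fin n → ℤ)) : Prop :=
  DCube n Q.1 Q.2 ⊆ DCube n F.1 F.2 ∧ 2 * dAvg n μ g F < dAvg n μ g Q ∧
    ∀ Q' : ℤ × (Fin n → ℤ), DCube n Q.1 Q.2 ⊆ DCube n Q'.1 Q'.2 →
      DCube n Q'.1 Q'.2 ⊆ DCube n F.1 F.2 → 2 * dAvg n μ g F < dAvg n μ g Q' →
      DCube n Q'.1 Q'.2 = DCube n Q.1 Q.2

/-- The collection of principal cubes generated from `Q0`. -/
inductive Principal (n : ℕ) (μ : Measure (Fin n → ℝ)) (g : (Fin n → ℝ) → ℝ)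
    (Q0 : ℤ × (Fin n → ℤ)) : ℤ × (Fin n → ℤ) → Prop
  | base : Principal n μ g Q0 Q0
  | child (F Q : ℤ × (Fin n → ℤ)) : Principal n μ g Q0 F → IsPChild n μ g F Q →
      Principal n μ g Q0 Q

/-- The set `E_𝓕(F) = F \ ⋃_{F' ∈ ch_𝓕(F)} F'`. -/
def PrincipalRest (n : ℕ) (μ : Measure (Fin n → ℝ)) (g : (Fin n → ℝ) → ℝ)
    (F : ℤ × (Fin n → ℤ)) : Set (Fin n → ℝ) :=
  DCube n F.1 F.2 \ ⋃ (Q : ℤ × (Fin n → ℤ)) (_ : IsPChild n μ g F Q), DCube n Q.1 Q.2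

open Filter Topology

lemma ENNReal.rpow_le_rpow_of_nonpos {x y : ℝ≥0∞} {z : ℝ} (hxy : x ≤ y) (hz : z ≤ 0) :
    y ^ z ≤ x ^ z := by
  have h := ENNReal.inv_le_inv.2 (ENNReal.rpow_le_rpow hxy (neg_nonneg.2 hz))
  rwa [← ENNReal.rpow_neg, ← ENNReal.rpow_neg, neg_neg] at h

/-- Reverse Hölder: `μ(X) = ∫ b^{1/p} b^{-1/p} ≤ ‖b‖₁^{1/p} ‖b^{-1/p}‖_q` whenever `b > 0` a.e.;
if `b` vanishes on a set of positive measure the right-hand side is infinite. -/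
lemma div_rpow_le_lintegral_rpow_neg {X : Type*} [MeasurableSpace X] {μ : Measure X}
    {b : X → ℝ} (hb : Measurable b) (hb0 : ∀ x, 0 ≤ b x) {p q : ℝ} (hpq : p.HolderConjugate q)
    {d : ℝ≥0∞} (hd : (∫⁻ x, ENNReal.ofReal (b x) ∂μ) ^ (1 / p) ≤ d) (hd0 : d ≠ 0)
    (hdt : d ≠ ⊤) :
    (μ univ / d) ^ q ≤ ∫⁻ x, ENNReal.ofReal (b x) ^ (-(q - 1)) ∂μ := by
  have hq0 : 0 < q := hpq.symm.pos
  have hW : Measurable fun x => ENNReal.ofReal (b x) := hb.ennreal_ofReal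
  by_cases hz : μ {x | b x = 0} = 0
  · have hpos : ∀ᵐ x ∂μ, ENNReal.ofReal (b x) ≠ 0 := by
      refine measure_mono_null (fun x hx => ?_) hz
      exact le_antisymm (ENNReal.ofReal_eq_zero.1 (not_ne_iff.1 hx)) (hb0 x)
    have hone : μ univ = ∫⁻ x, ENNReal.ofReal (b x) ^ (1 / p) *
        ENNReal.ofReal (b x) ^ (-(1 / p)) ∂μ := by
      rw [← setLIntegral_one, Measure.restrict_univ]
      refine lintegral_congr_ae (hpos.mono fun x hx => ?_)
      dsimp only
      rw [← ENNReal.rpow_add _ _ hx ENNReal.ofReal_ne_top, add_neg_cancel, ENNReal.rpow_zero]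
    have hholder := ENNReal.lintegral_mul_le_Lp_mul_Lq μ hpq
      (hW.pow_const (1 / p)).aemeasurable (hW.pow_const (-(1 / p))).aemeasurable
    simp only [Pi.mul_apply, ← ENNReal.rpow_mul, one_div_mul_cancel hpq.ne_zero,
      ENNReal.rpow_one, neg_mul, one_div_mul_eq_div, hpq.symm.div_conj_eq_sub_one] at hholder
    rw [← hone] at hholder
    have hdiv : μ univ / d ≤ (∫⁻ x, ENNReal.ofReal (b x) ^ (-(q - 1)) ∂μ) ^ (1 / q) := by
      rw [ENNReal.div_le_iff hd0 hdt, mul_comm]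
      exact hholder.trans (by gcongr)
    calc (μ univ / d) ^ q ≤ ((∫⁻ x, ENNReal.ofReal (b x) ^ (-(q - 1)) ∂μ) ^ (1 / q)) ^ q := by
          gcongr
      _ = ∫⁻ x, ENNReal.ofReal (b x) ^ (-(q - 1)) ∂μ := by
          rw [← ENNReal.rpow_mul, one_div_mul_cancel hq0.ne', ENNReal.rpow_one]
  · have htop : ∫⁻ x, ENNReal.ofReal (b x) ^ (-(q - 1)) ∂μ = ⊤ := by
      refine eq_top_iff.2 ((ENNReal.top_mul hz).symm.le.trans ?_)
      calc ⊤ * μ {x | b x = 0} = ∫⁻ _ in {x | b x = 0}, ⊤ ∂μ := (setLIntegral_const _ _).symm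
        _ ≤ ∫⁻ x in {x | b x = 0}, ENNReal.ofReal (b x) ^ (-(q - 1)) ∂μ := by
          refine setLIntegral_mono' (hb (measurableSet_singleton 0)) fun x hx => ?_
          rw [show b x = 0 from hx, ENNReal.ofReal_zero,
            ENNReal.zero_rpow_of_neg (by linarith [hpq.symm.lt])]
        _ ≤ _ := setLIntegral_le_lintegral _ _
    exact htop ▸ le_top

lemma lintegral_eq_top_of_le_setLIntegral {X : Type*} [MeasurableSpace X] {μ : Measure X}
    {s : ℕ → Set X} (hs : ∀ k, MeasurableSet (s k)) (hd : Pairwise (Function.onFun Disjoint s))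
    {f : X → ℝ≥0∞} {κ : ℝ≥0∞} (hκ : κ ≠ 0) (hf : ∀ k, κ ≤ ∫⁻ x in s k, f x ∂μ) :
    ∫⁻ x, f x ∂μ = ⊤ := by
  refine eq_top_iff.2 ?_
  calc ⊤ = ∑' _ : ℕ, κ := (ENNReal.tsum_const_eq_top_of_ne_zero hκ).symm
    _ ≤ ∑' k, ∫⁻ x in s k, f x ∂μ := ENNReal.tsum_le_tsum hf
    _ = ∫⁻ x in ⋃ k, s k, f x ∂μ := (lintegral_iUnion hs hd f).symm
    _ ≤ ∫⁻ x, f x ∂μ := setLIntegral_le_lintegral _ _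

lemma cube_eq_pi (n : ℕ) (c : Fin n → ℝ) (h : ℝ) :
    Cube n c h = Set.pi univ fun i => Icc (c i) (c i + h) := by
  ext x; simp [Cube, Set.pi, mem_Icc]

lemma measurableSet_cube (n : ℕ) (c : Fin n → ℝ) (h : ℝ) : MeasurableSet (Cube n c h) := by
  rw [cube_eq_pi]; exact .univ_pi fun _ => measurableSet_Icc

lemma isCompact_cube (n : ℕ) (c : Fin n → ℝ) (h : ℝ) : IsCompact (Cube n c h) := by
  rw [cube_eq_pi]; exact isCompact_univ_pi fun _ => isCompact_Icc

lemma volume_cube (n : ℕ) (c : Fin n → ℝ) (h : ℝ) :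
    volume (Cube n c h) = ENNReal.ofReal h ^ n := by
  rw [cube_eq_pi, volume_pi_pi]; simp [Real.volume_Icc]

lemma cube_zero_mono {n : ℕ} {r s : ℝ} (hrs : r ≤ s) : Cube n 0 r ⊆ Cube n 0 s :=
  fun x hx i => by
    have := hx i
    simp only [Pi.zero_apply, zero_add] at this ⊢
    exact ⟨this.1, this.2.trans hrs⟩

lemma zero_mem_cube_zero {n : ℕ} {r : ℝ} (hr : 0 ≤ r) : (0 : Fin n → ℝ) ∈ Cube n 0 r :=
  fun _ => by simpa using hr

lemma euclidNorm_pos {n : ℕ} {x : Fin n → ℝ} (hx : x ≠ 0) : 0 < euclidNorm n x := by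
  obtain ⟨i, hi⟩ := Function.ne_iff.1 hx
  exact Real.sqrt_pos.2 <| Finset.sum_pos' (fun j _ => sq_nonneg (x j))
    ⟨i, Finset.mem_univ i, pow_pos (abs_pos.2 hi) 2 |>.trans_eq (sq_abs _)⟩

lemma euclidNorm_le_of_mem_cube {n : ℕ} {x : Fin n → ℝ} {r : ℝ} (hr : 0 ≤ r)
    (hx : x ∈ Cube n 0 r) : euclidNorm n x ≤ Real.sqrt n * r := by
  have hsum : ∑ i, x i ^ 2 ≤ n * r ^ 2 := by
    calc ∑ i, x i ^ 2 ≤ ∑ _i : Fin n, r ^ 2 :=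
          Finset.sum_le_sum fun i _ => by
            have := hx i
            simp only [Pi.zero_apply, zero_add] at this
            exact pow_le_pow_left₀ this.1 this.2 2
      _ = n * r ^ 2 := by simp
  calc euclidNorm n x ≤ Real.sqrt (n * r ^ 2) := Real.sqrt_le_sqrt hsum
    _ = Real.sqrt n * r := by rw [Real.sqrt_mul n.cast_nonneg, Real.sqrt_sq hr]

lemma rpow_le_euclidNorm_rpow {n : ℕ} {x : Fin n → ℝ} {r γ : ℝ} (hr : 0 ≤ r) (hγ : γ ≤ 0)
    (hx : x ∈ Cube n 0 r) (hx0 : x ≠ 0) : (Real.sqrt n * r) ^ γ ≤ euclidNorm n x ^ γ :=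
  Real.rpow_le_rpow_of_nonpos (euclidNorm_pos hx0) (euclidNorm_le_of_mem_cube hr hx) hγ

def cubeShell (n : ℕ) (r : ℝ) : Set (Fin n → ℝ) := Cube n 0 r \ Cube n 0 (r / 2)

lemma measurableSet_cubeShell (n : ℕ) (r : ℝ) : MeasurableSet (cubeShell n r) :=
  (measurableSet_cube _ _ _).diff (measurableSet_cube _ _ _)

lemma cubeShell_subset_cube (n : ℕ) (r : ℝ) : cubeShell n r ⊆ Cube n 0 r := sdiff_subset

lemma ne_zero_of_mem_cubeShell {n : ℕ} {r : ℝ} (hr : 0 ≤ r) {x : Fin n → ℝ}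
    (hx : x ∈ cubeShell n r) : x ≠ 0 := by
  rintro rfl
  exact hx.2 (zero_mem_cube_zero (by linarith))

lemma ofReal_le_volume_cubeShell {n : ℕ} (hn : n ≠ 0) {r : ℝ} (hr : 0 ≤ r) :
    ENNReal.ofReal (r ^ n / 2) ≤ volume (cubeShell n r) := by
  have hhalf : r ^ n / 2 ≤ r ^ n - (r / 2) ^ n := by
    have h2n : (2 : ℝ) ≤ 2 ^ n := le_self_pow₀ one_le_two hn
    have : r ^ n / 2 ^ n ≤ r ^ n / 2 := div_le_div_of_nonneg_left (by positivity) two_pos h2n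
    rw [div_pow]; linarith
  calc ENNReal.ofReal (r ^ n / 2) ≤ ENNReal.ofReal (r ^ n) - ENNReal.ofReal ((r / 2) ^ n) := by
        rw [← ENNReal.ofReal_sub _ (by positivity)]; exact ENNReal.ofReal_le_ofReal hhalf
    _ = volume (Cube n 0 r) - volume (Cube n 0 (r / 2)) := by
        rw [volume_cube, volume_cube, ENNReal.ofReal_pow hr, ENNReal.ofReal_pow (by linarith)]
    _ ≤ volume (cubeShell n r) := le_measure_sdiff

lemma pairwise_disjoint_cubeShell (n : ℕ) :
    Pairwise (Function.onFun Disjoint fun k : ℕ => cubeShell n ((1 / 2) ^ k)) := by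
  have key : ∀ i j : ℕ, i < j →
      Disjoint (cubeShell n ((1 / 2) ^ i)) (cubeShell n ((1 / 2) ^ j)) := fun i j hij =>
    disjoint_sdiff_left.mono_right <| (cubeShell_subset_cube n _).trans <| cube_zero_mono <| by
      rw [div_eq_mul_one_div ((1 / 2 : ℝ) ^ i) 2, ← pow_succ]
      exact pow_le_pow_of_le_one (by norm_num) (by norm_num) hij
  intro i j hij
  rcases hij.lt_or_gt with h | h
  exacts [key i j h, (key j i h).symm]

lemma min_le_hausdorffContent {n : ℕ} {lam : ℝ} (hl0 : 0 ≤ lam) (hln : lam ≤ n)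
    (E : Set (Fin n → ℝ)) (r : ℝ) :
    min (ENNReal.ofReal r ^ lam) (volume E * ENNReal.ofReal r ^ (lam - n)) ≤
      hausdorffContent n lam E := by
  simp only [hausdorffContent, le_iInf_iff]
  intro c h hpos hcov
  by_cases hbig : ∃ j, r ≤ h j
  · obtain ⟨j, hj⟩ := hbig
    exact (min_le_left _ _).trans <| (ENNReal.rpow_le_rpow (ENNReal.ofReal_le_ofReal hj) hl0).trans
      (ENNReal.le_tsum j)
  · push Not at hbig
    refine (min_le_right _ _).trans ?_
    calc volume E * ENNReal.ofReal r ^ (lam - n)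
        ≤ (∑' j, volume (Cube n (c j) (h j))) * ENNReal.ofReal r ^ (lam - n) := by
          gcongr; exact (measure_mono hcov).trans (measure_iUnion_le _)
      _ = ∑' j, ENNReal.ofReal (h j) ^ (n : ℝ) * ENNReal.ofReal r ^ (lam - n) := by
          simp [volume_cube, ENNReal.tsum_mul_right]
      _ ≤ ∑' j, ENNReal.ofReal (h j) ^ (n : ℝ) * ENNReal.ofReal (h j) ^ (lam - n) := by
          refine ENNReal.tsum_le_tsum fun j => mul_le_mul_right ?_ _
          exact ENNReal.rpow_le_rpow_of_nonpos (ENNReal.ofReal_le_ofReal (hbig j).le) (by linarith)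
      _ = ∑' j, ENNReal.ofReal (h j) ^ lam := by
          congr 1 with j
          rw [← ENNReal.rpow_add _ _ (ENNReal.ofReal_pos.2 (hpos j)).ne' ENNReal.ofReal_ne_top]
          ring_nf

lemma ofReal_rpow_le_hausdorffContent {n : ℕ} {lam : ℝ} (hl0 : 0 ≤ lam) (hln : lam ≤ n)
    {c : Fin n → ℝ} {r : ℝ} (hr : 0 < r) {E : Set (Fin n → ℝ)}
    (hE : Cube n c r ≤ᵐ[volume] E) : ENNReal.ofReal r ^ lam ≤ hausdorffContent n lam E := by
  refine (le_min le_rfl ?_).trans (min_le_hausdorffContent hl0 hln E r)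
  calc ENNReal.ofReal r ^ lam = ENNReal.ofReal r ^ (n : ℝ) * ENNReal.ofReal r ^ (lam - n) := by
        rw [← ENNReal.rpow_add _ _ (ENNReal.ofReal_pos.2 hr).ne' ENNReal.ofReal_ne_top]; ring_nf
    _ ≤ volume E * ENNReal.ofReal r ^ (lam - n) := by
        gcongr
        rw [ENNReal.rpow_natCast, ← volume_cube n c]
        exact measure_mono_ae hE

lemma ofReal_rpow_mul_le_choquet {n : ℕ} {lam : ℝ} (hl0 : 0 ≤ lam) (hln : lam ≤ n)
    {b : (Fin n → ℝ) → ℝ} {c : Fin n → ℝ} {r : ℝ} (hr : 0 < r) {s : ℝ≥0∞} (hs : s ≠ ⊤)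
    (hbs : ∀ᵐ x ∂volume, x ∈ Cube n c r → s ≤ ENNReal.ofReal (b x)) :
    ENNReal.ofReal r ^ lam * s ≤ choquet n lam b := by
  have hlevel : ∀ t ∈ Ioo 0 s.toReal,
      ENNReal.ofReal r ^ lam ≤ hausdorffContent n lam {y | t < b y} := by
    intro t ht
    refine ofReal_rpow_le_hausdorffContent (c := c) hl0 hln hr ?_
    filter_upwards [hbs] with x hx hxQ
    have : ENNReal.ofReal t < ENNReal.ofReal (b x) :=
      ((ENNReal.ofReal_lt_iff_lt_toReal ht.1.le hs).2 ht.2).trans_le (hx hxQ)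
    exact (ENNReal.ofReal_lt_ofReal_iff_of_nonneg ht.1.le).1 this
  calc ENNReal.ofReal r ^ lam * s = ∫⁻ _ in Ioo 0 s.toReal, ENNReal.ofReal r ^ lam := by
        rw [setLIntegral_const, Real.volume_Ioo, sub_zero, ENNReal.ofReal_toReal hs, mul_comm]
    _ ≤ ∫⁻ t in Ioo 0 s.toReal, hausdorffContent n lam {y | t < b y} :=
        setLIntegral_mono' measurableSet_Ioo hlevel
    _ ≤ choquet n lam b := lintegral_mono_set Ioo_subset_Ioi_self

lemma setLIntegral_div_volume_le_maximalFn {n : ℕ} (f : (Fin n → ℝ) → ℝ) {c x : Fin n → ℝ}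
    {h : ℝ} (hh : 0 < h) (hx : x ∈ Cube n c h) :
    (∫⁻ y in Cube n c h, ENNReal.ofReal |f y|) / volume (Cube n c h) ≤ maximalFn n f x := by
  rw [volume_cube, ← ENNReal.ofReal_pow hh.le]
  exact le_iSup_of_le c <| le_iSup_of_le h <| le_iSup_of_le hh <| le_iSup_of_le hx le_rfl

lemma IsA1.mono {n : ℕ} {C C' : ℝ≥0∞} {b : (Fin n → ℝ) → ℝ} (hA : IsA1 n C b) (hCC' : C ≤ C') :
    IsA1 n C' b :=
  ⟨hA.1, hA.2.mono fun _ hx => hx.trans (by gcongr)⟩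

theorem IsA1.setLIntegral_cube_le {n : ℕ} {lam : ℝ} (hl0 : 0 ≤ lam) (hln : lam ≤ n)
    {C : ℝ≥0∞} {b : (Fin n → ℝ) → ℝ} (hA : IsA1 n C b) (hC0 : C ≠ 0) (hC : C ≠ ⊤)
    (hch : choquet n lam b ≤ 1) (c : Fin n → ℝ) {r : ℝ} (hr : 0 < r) :
    ∫⁻ x in Cube n c r, ENNReal.ofReal (b x) ≤ C * ENNReal.ofReal r ^ ((n : ℝ) - lam) := by
  obtain ⟨⟨-, hb0, hbloc, -⟩, hmax⟩ := hA
  have hr0 : ENNReal.ofReal r ≠ 0 := (ENNReal.ofReal_pos.2 hr).ne'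
  have hQ0 : volume (Cube n c r) ≠ 0 := by rw [volume_cube]; exact pow_ne_zero _ hr0
  have hQ : volume (Cube n c r) ≠ ⊤ := by
    rw [volume_cube]; exact ENNReal.pow_ne_top ENNReal.ofReal_ne_top
  set u := (∫⁻ x in Cube n c r, ENNReal.ofReal (b x)) / volume (Cube n c r)
  have hu : u ≠ ⊤ := ENNReal.div_ne_top
    (hbloc.integrableOn_isCompact (isCompact_cube n c r)).lintegral_lt_top.ne hQ0
  have hub : ∀ᵐ x ∂volume, x ∈ Cube n c r → u / C ≤ ENNReal.ofReal (b x) := by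
    filter_upwards [hmax] with x hx hxQ
    have havg := setLIntegral_div_volume_le_maximalFn b hr hxQ
    simp_rw [abs_of_nonneg (hb0 _)] at havg
    rw [ENNReal.div_le_iff hC0 hC]
    exact (havg.trans hx).trans_eq (mul_comm _ _)
  have hchoq := (ofReal_rpow_mul_le_choquet hl0 hln hr (ENNReal.div_ne_top hu hC0) hub).trans hch
  have hu' : u ≤ (ENNReal.ofReal r ^ lam)⁻¹ * C := by
    rw [← ENNReal.div_le_iff hC0 hC, ENNReal.le_inv_iff_mul_le, mul_comm]
    exact hchoq
  calc ∫⁻ x in Cube n c r, ENNReal.ofReal (b x) = u * volume (Cube n c r) :=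
        (ENNReal.div_mul_cancel hQ0 hQ).symm
    _ ≤ (ENNReal.ofReal r ^ lam)⁻¹ * C * volume (Cube n c r) := by gcongr
    _ = C * ENNReal.ofReal r ^ ((n : ℝ) - lam) := by
        rw [volume_cube, ← ENNReal.rpow_natCast, ← ENNReal.rpow_neg, mul_comm _ C, mul_assoc,
          ← ENNReal.rpow_add _ _ hr0 ENNReal.ofReal_ne_top]
        ring_nf

lemma le_setLIntegral_cubeShell_euclidNorm_rpow {n : ℕ} (hn : n ≠ 0) {γ r : ℝ} (hγ : γ ≤ 0)
    (hr : 0 < r) :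
    ENNReal.ofReal ((Real.sqrt n * r) ^ γ * (r ^ n / 2)) ≤
      ∫⁻ x in cubeShell n r, ENNReal.ofReal (euclidNorm n x ^ γ) := by
  rw [ENNReal.ofReal_mul (by positivity)]
  calc ENNReal.ofReal ((Real.sqrt n * r) ^ γ) * ENNReal.ofReal (r ^ n / 2)
      ≤ ENNReal.ofReal ((Real.sqrt n * r) ^ γ) * volume (cubeShell n r) := by
        gcongr; exact ofReal_le_volume_cubeShell hn hr.le
    _ = ∫⁻ _ in cubeShell n r, ENNReal.ofReal ((Real.sqrt n * r) ^ γ) :=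
        (setLIntegral_const _ _).symm
    _ ≤ ∫⁻ x in cubeShell n r, ENNReal.ofReal (euclidNorm n x ^ γ) :=
        setLIntegral_mono' (measurableSet_cubeShell n r) fun x hx => ENNReal.ofReal_le_ofReal <|
          rpow_le_euclidNorm_rpow hr.le hγ (cubeShell_subset_cube n r hx)
            (ne_zero_of_mem_cubeShell hr.le hx)

theorem morreyNormW_euclidNorm_rpow_indicator_cube_eq_top {n : ℕ} (hn : n ≠ 0) {p lam α : ℝ}
    (hp : 0 < p) (hα0 : α ≤ 0) (hα : α < lam - n) :
    morreyNormW n p lam (fun x => euclidNorm n x ^ α) ((Cube n 0 1).indicator fun _ => 1) = ⊤ := by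
  set K := Real.sqrt n ^ α / 2
  have hbound : ∀ r ∈ Ioc (0 : ℝ) 1, ENNReal.ofReal ((K * r ^ (α + n - lam)) ^ (1 / p)) ≤
      morreyNormW n p lam (fun x => euclidNorm n x ^ α) ((Cube n 0 1).indicator fun _ => 1) := by
    rintro r ⟨hr, hr1⟩
    have hint : ENNReal.ofReal ((Real.sqrt n * r) ^ α * (r ^ n / 2)) ≤
        ∫⁻ x in Cube n 0 r, ENNReal.ofReal |(Cube n 0 1).indicator (fun _ => (1 : ℝ)) x| ^ p *
          ENNReal.ofReal (euclidNorm n x ^ α) := by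
      rw [setLIntegral_congr_fun (g := fun x => ENNReal.ofReal (euclidNorm n x ^ α))
        (measurableSet_cube n 0 r) fun x hx => by
          simp [indicator_of_mem (cube_zero_mono hr1 hx)]]
      exact (le_setLIntegral_cubeShell_euclidNorm_rpow hn hα0 hr).trans
        (lintegral_mono_set (cubeShell_subset_cube n r))
    have hK : K * r ^ (α + n - lam) = (Real.sqrt n * r) ^ α * (r ^ n / 2) / r ^ lam := by
      rw [Real.mul_rpow (Real.sqrt_nonneg _) hr.le, Real.rpow_sub hr, Real.rpow_add hr,
        Real.rpow_natCast]
      ring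
    calc ENNReal.ofReal ((K * r ^ (α + n - lam)) ^ (1 / p))
        = (ENNReal.ofReal ((Real.sqrt n * r) ^ α * (r ^ n / 2)) /
            ENNReal.ofReal r ^ lam) ^ (1 / p) := by
          rw [hK, ← ENNReal.ofReal_rpow_of_nonneg (by positivity) (by positivity),
            ENNReal.ofReal_div_of_pos (by positivity), ENNReal.ofReal_rpow_of_pos hr]
      _ ≤ _ := by
          unfold morreyNormW morreyNormWE
          exact le_iSup_of_le 0 <| le_iSup_of_le r <| le_iSup_of_le hr <| by gcongr
  have hlim : Tendsto (fun r => ENNReal.ofReal ((K * r ^ (α + n - lam)) ^ (1 / p))) (𝓝[>] 0)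
      (𝓝 ⊤) :=
    ENNReal.tendsto_ofReal_atTop.comp <| (tendsto_rpow_atTop (by positivity)).comp <|
      (tendsto_rpow_neg_nhdsGT_zero (by linarith)).const_mul_atTop (by positivity)
  exact top_le_iff.1 <| le_of_tendsto hlim <| mem_of_superset (Ioc_mem_nhdsGT one_pos) hbound

lemma ofReal_rpow_le_indicator_rpow_of_mem_cubeShell {n : ℕ} {p q α r : ℝ} (hp : 0 < p)
    (hq : 0 < q) (hα : 0 ≤ α) (hr : 0 < r) (hr1 : r ≤ 1) {x : Fin n → ℝ}
    (hx : x ∈ cubeShell n r) :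
    ENNReal.ofReal ((Real.sqrt n * r) ^ (-(α / p * q))) ≤
      ENNReal.ofReal |(Cube n 0 1).indicator (fun x => (euclidNorm n x ^ α) ^ (-(1:ℝ) / p)) x|
        ^ q := by
  have hx0 := euclidNorm_pos (ne_zero_of_mem_cubeShell hr.le hx)
  rw [indicator_of_mem (cube_zero_mono hr1 (cubeShell_subset_cube n r hx)),
    ← Real.rpow_mul hx0.le, abs_of_nonneg (Real.rpow_pos_of_pos hx0 _).le,
    ENNReal.ofReal_rpow_of_nonneg (Real.rpow_pos_of_pos hx0 _).le hq.le, ← Real.rpow_mul hx0.le,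
    show α * (-1 / p) * q = -(α / p * q) by ring]
  exact ENNReal.ofReal_le_ofReal <| rpow_le_euclidNorm_rpow hr.le
    (neg_nonpos.2 (by positivity)) (cubeShell_subset_cube n r hx)
    (ne_zero_of_mem_cubeShell hr.le hx)

theorem IsA1.ofReal_le_setLIntegral_cubeShell_rpow_neg {n : ℕ} (hn : n ≠ 0) {p q lam : ℝ}
    (hpq : p.HolderConjugate q) (hl0 : 0 ≤ lam) (hln : lam ≤ n) {C : ℝ≥0∞}
    {b : (Fin n → ℝ) → ℝ} (hA : IsA1 n C b) (hC0 : C ≠ 0) (hC : C ≠ ⊤)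
    (hch : choquet n lam b ≤ 1) {r : ℝ} (hr : 0 < r) :
    ENNReal.ofReal ((r ^ n / 2 / (C.toReal * r ^ ((n : ℝ) - lam)) ^ (1 / p)) ^ q) ≤
      ∫⁻ x in cubeShell n r, ENNReal.ofReal (b x) ^ (-(q - 1)) := by
  have hp := hpq.pos
  have hc : 0 < C.toReal := ENNReal.toReal_pos hC0 hC
  have hCr : 0 < C.toReal * r ^ ((n : ℝ) - lam) := mul_pos hc (Real.rpow_pos_of_pos hr _)
  have hbd : (∫⁻ x in cubeShell n r, ENNReal.ofReal (b x)) ^ (1 / p) ≤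
      ENNReal.ofReal ((C.toReal * r ^ ((n : ℝ) - lam)) ^ (1 / p)) := by
    rw [← ENNReal.ofReal_rpow_of_nonneg hCr.le (one_div_pos.2 hp).le]
    gcongr
    calc ∫⁻ x in cubeShell n r, ENNReal.ofReal (b x)
        ≤ ∫⁻ x in Cube n 0 r, ENNReal.ofReal (b x) := lintegral_mono_set (cubeShell_subset_cube n r)
      _ ≤ C * ENNReal.ofReal r ^ ((n : ℝ) - lam) := hA.setLIntegral_cube_le hl0 hln hC0 hC hch 0 hr
      _ = ENNReal.ofReal (C.toReal * r ^ ((n : ℝ) - lam)) := by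
          rw [ENNReal.ofReal_mul hc.le, ENNReal.ofReal_toReal hC, ENNReal.ofReal_rpow_of_pos hr]
  have hholder := div_rpow_le_lintegral_rpow_neg (μ := volume.restrict (cubeShell n r))
    hA.1.1 hA.1.2.1 hpq hbd (ENNReal.ofReal_pos.2 (by positivity)).ne' ENNReal.ofReal_ne_top
  rw [Measure.restrict_apply_univ] at hholder
  rw [← ENNReal.ofReal_rpow_of_nonneg (by positivity) hpq.symm.nonneg,
    ENNReal.ofReal_div_of_pos (by positivity)]
  exact le_trans (ENNReal.rpow_le_rpow (ENNReal.div_le_div_right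
    (ofReal_le_volume_cubeShell hn hr.le) _) hpq.symm.nonneg) hholder

lemma rpow_mul_div_rpow_eq {s r c p q β e : ℝ} (n : ℕ) (hs : 0 ≤ s) (hr : 0 < r) (hc : 0 < c) :
    (s * r) ^ (-β) * (r ^ n / 2 / (c * r ^ e) ^ (1 / p)) ^ q =
      s ^ (-β) * (1 / 2) ^ q * c ^ (-(q / p)) * r ^ (-β + q * (n - e / p)) := by
  rw [Real.mul_rpow hs hr.le, Real.mul_rpow hc.le (by positivity), ← Real.rpow_mul hr.le,
    ← Real.rpow_natCast, div_div, Real.div_rpow (by positivity) (by positivity),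
    Real.mul_rpow (by positivity) (by positivity), Real.div_rpow (by positivity) (by positivity),
    Real.mul_rpow (by positivity) (by positivity), ← Real.rpow_mul hc.le, ← Real.rpow_mul hr.le,
    ← Real.rpow_mul hr.le, Real.one_rpow, Real.rpow_add hr, Real.rpow_neg hc.le,
    show q * (n - e / p) = n * q - e * (1 / p) * q by ring, Real.rpow_sub hr,
    show 1 / p * q = q / p by ring]
  field_simp

theorem IsA1.le_setLIntegral_cubeShell {n : ℕ} (hn : n ≠ 0) {p q lam α : ℝ}
    (hpq : p.HolderConjugate q) (hl0 : 0 ≤ lam) (hln : lam ≤ n) (hα : lam + (p - 1) * n ≤ α)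
    {C : ℝ≥0∞} {b : (Fin n → ℝ) → ℝ} (hA : IsA1 n C b) (hC0 : C ≠ 0) (hC : C ≠ ⊤)
    (hch : choquet n lam b ≤ 1) {r : ℝ} (hr : 0 < r) (hr1 : r ≤ 1) :
    ENNReal.ofReal (Real.sqrt n ^ (-(α / p * q)) * (1 / 2) ^ q * C.toReal ^ (-(q / p))) ≤
      ∫⁻ x in cubeShell n r,
        ENNReal.ofReal |(Cube n 0 1).indicator (fun x => (euclidNorm n x ^ α) ^ (-(1:ℝ) / p)) x|
          ^ q * ENNReal.ofReal (b x) ^ (-(q - 1)) := by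
  have hp := hpq.pos
  have hq := hpq.symm.pos
  have hc : 0 < C.toReal := ENNReal.toReal_pos hC0 hC
  have hδ : -(α / p * q) + q * (n - (n - lam) / p) ≤ 0 := by
    have : -(α / p * q) + q * (n - (n - lam) / p) = q / p * (lam + (p - 1) * n - α) := by
      field_simp; ring
    rw [this]; exact mul_nonpos_of_nonneg_of_nonpos (by positivity) (by linarith)
  calc ENNReal.ofReal (Real.sqrt n ^ (-(α / p * q)) * (1 / 2) ^ q * C.toReal ^ (-(q / p)))
      ≤ ENNReal.ofReal (Real.sqrt n ^ (-(α / p * q)) * (1 / 2) ^ q * C.toReal ^ (-(q / p)) *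
          r ^ (-(α / p * q) + q * (n - (n - lam) / p))) :=
        ENNReal.ofReal_le_ofReal <| le_mul_of_one_le_right (by positivity)
          (Real.one_le_rpow_of_pos_of_le_one_of_nonpos hr hr1 hδ)
    _ = ENNReal.ofReal ((Real.sqrt n * r) ^ (-(α / p * q))) *
          ENNReal.ofReal ((r ^ n / 2 / (C.toReal * r ^ ((n : ℝ) - lam)) ^ (1 / p)) ^ q) := by
        rw [← ENNReal.ofReal_mul (by positivity),
          rpow_mul_div_rpow_eq n (Real.sqrt_nonneg _) hr hc]
    _ ≤ ENNReal.ofReal ((Real.sqrt n * r) ^ (-(α / p * q))) *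
          ∫⁻ x in cubeShell n r, ENNReal.ofReal (b x) ^ (-(q - 1)) := by
        gcongr; exact hA.ofReal_le_setLIntegral_cubeShell_rpow_neg hn hpq hl0 hln hC0 hC hch hr
    _ = ∫⁻ x in cubeShell n r,
          ENNReal.ofReal ((Real.sqrt n * r) ^ (-(α / p * q))) * ENNReal.ofReal (b x) ^ (-(q - 1)) :=
        (lintegral_const_mul _ (hA.1.1.ennreal_ofReal.pow_const _)).symm
    _ ≤ _ := setLIntegral_mono' (measurableSet_cubeShell n r) fun x hx => by
        gcongr
        exact ofReal_rpow_le_indicator_rpow_of_mem_cubeShell hp hq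
          (by nlinarith [hpq.sub_one_pos]) hr hr1 hx

theorem lintegral_euclidNorm_rpow_indicator_mul_eq_top_of_mem_morreyBasis {n : ℕ} (hn : n ≠ 0)
    {p q lam α : ℝ} (hpq : p.HolderConjugate q) (hl0 : 0 ≤ lam) (hln : lam ≤ n)
    (hα : lam + (p - 1) * n ≤ α) {b : (Fin n → ℝ) → ℝ} (hb : b ∈ MorreyBasis n lam) :
    ∫⁻ x, ENNReal.ofReal |(Cube n 0 1).indicator (fun x => (euclidNorm n x ^ α) ^ (-(1:ℝ) / p)) x|
      ^ q * ENNReal.ofReal (b x) ^ (-(q - 1)) = ⊤ := by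
  obtain ⟨⟨C, hC, hA⟩, hch⟩ := hb
  have hC1 : 1 ≤ max C 1 := le_max_right _ _
  have hCtop : max C 1 ≠ ⊤ := max_ne_top hC ENNReal.one_ne_top
  have hc : 0 < (max C 1).toReal := ENNReal.toReal_pos (one_pos.trans_le hC1).ne' hCtop
  have hn' : 0 < Real.sqrt n := Real.sqrt_pos.2 (by positivity)
  refine lintegral_eq_top_of_le_setLIntegral (fun k => measurableSet_cubeShell n _)
    (pairwise_disjoint_cubeShell n) ?_ fun k =>
      (hA.mono (le_max_left C 1)).le_setLIntegral_cubeShell hn hpq hl0 hln hα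
        (one_pos.trans_le hC1).ne' hCtop hch (by positivity)
        (pow_le_one₀ (by norm_num) (by norm_num))
  exact (ENNReal.ofReal_pos.2 (by positivity)).ne'

/-- if `α < λ - n` then `‖w^{1/p} 1_{(0,1)^n}‖_{L^{p,λ}} = ∞`, and if
`α ≥ λ + (p-1)n` then `‖w^{-1/p} 1_{(0,1)^n}‖_{H^{p',λ}} = ∞`, for `w = |·|^α`. -/
theorem power_weight_endpoints (n : ℕ) (p lam α : ℝ) (hp : 1 < p)
    (h1 : 0 < lam) (h2 : lam < n) :
    (α < lam - n →
      morreyNormW n p lam (fun x => euclidNorm n x ^ α)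
        ((Cube n 0 1).indicator fun _ => 1) = ⊤) ∧
    (lam + (p - 1) * n ≤ α →
      hNorm n (p/(p-1)) lam
        ((Cube n 0 1).indicator fun x => (euclidNorm n x ^ α) ^ (-(1:ℝ)/p)) = ⊤) := by
  have hn : n ≠ 0 := by rintro rfl; norm_num at h2; linarith
  refine ⟨fun hα => morreyNormW_euclidNorm_rpow_indicator_cube_eq_top hn (by linarith)
    (by linarith) hα, fun hα => ?_⟩
  have hpq : p.HolderConjugate (p / (p - 1)) := .conjExponent hp
  simp only [hNorm, iInf_eq_top]
  intro b hb
  rw [lintegral_euclidNorm_rpow_indicator_mul_eq_top_of_mem_morreyBasis hn hpq h1.le h2.le hα hb,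
    ENNReal.top_rpow_of_pos (one_div_pos.2 hpq.symm.pos)]
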